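/- arXiv:1110.4441 — 2 statements merged into one kernel-verified Lean document; each statement's English description precedes it below -/
import Mathlib

section
/- Let β > 0 and consider minimizing over real parameters h, k, p, q (with 0 < k < 2) the function L(h,k,p,q) = [p² + h²q²/(1−(1−k)²)] + ξ·h²/(1−(1−k)²) + γ·α⁻²[(1−h−p)² + h²(k−q)²/(1−(1−k)²)], where β = γ/(ξ(γ+α²)) and ξ, γ, α > 0. The minimum is attained at p = q = ξ(√(4β+1)−1)/2, h = (2β+1−√(4β+1))/(2β), k = (√(4β+1)−1)/(2β), and at this minimum h + k = 1. -/
open Real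

/-- The per-frequency LQ Lagrangian
`L(h,k,p,q) = [p² + h²q²/(1-(1-k)²)] + ξ h²/(1-(1-k)²)
  + γ α⁻² [(1-h-p)² + h²(k-q)²/(1-(1-k)²)]`. -/
noncomputable def lqLagrangian (ξ γ α : ℝ) (h k p q : ℝ) : ℝ :=
  (p ^ 2 + h ^ 2 * q ^ 2 / (1 - (1 - k) ^ 2)) + ξ * h ^ 2 / (1 - (1 - k) ^ 2)
    + γ * (α ^ 2)⁻¹ * ((1 - h - p) ^ 2 + h ^ 2 * (k - q) ^ 2 / (1 - (1 - k) ^ 2))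

/-!
Minimize successively over `p`, `q`, `h` and `k`; each of the first three steps is the bound
`u v / (u + v) · (x + y)² ≤ u x² + v y²`. With `c = γ α⁻²` one has `c / (1 + c) = β ξ`, so the
`p`- and `q`-blocks leave `ξ (β (1 - h)² + (β k² + 1) h² / (1 - (1 - k)²))`. Optimizing `h`
leaves `ξ β (β k² + 1) / (2 β k + 1)`, which exceeds `ξ β k⋆` by `ξ β² (k - k⋆)² / (2 β k + 1)`
because `k⋆` is the positive root of `β k² + k = 1`. All bounds are equalities at the stated point.
-/

theorem mul_sq_add_mul_sq_eq {K : Type*} [Field K] (u v x y : K) (huv : u + v ≠ 0) :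
    u * x ^ 2 + v * y ^ 2 = u * v / (u + v) * (x + y) ^ 2 + (u * x - v * y) ^ 2 / (u + v) := by
  field_simp
  ring

theorem mul_div_add_mul_sq_le {K : Type*} [Field K] [LinearOrder K] [IsStrictOrderedRing K]
    {u v : K} (x y : K) (hu : 0 ≤ u) (hv : 0 ≤ v) :
    u * v / (u + v) * (x + y) ^ 2 ≤ u * x ^ 2 + v * y ^ 2 := by
  rcases (add_nonneg hu hv).eq_or_lt with huv | huv
  · rw [← huv, div_zero, zero_mul]
    positivity
  · rw [mul_sq_add_mul_sq_eq u v x y huv.ne']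
    have : 0 ≤ (u * x - v * y) ^ 2 / (u + v) := by positivity
    linarith

theorem one_sub_one_sub_sq_pos {k : ℝ} (hk₀ : 0 < k) (hk₂ : k < 2) : 0 < 1 - (1 - k) ^ 2 := by
  nlinarith

theorem lqLagrangian_eq (ξ γ α h k p q : ℝ) :
    lqLagrangian ξ γ α h k p q =
      (p ^ 2 + γ * (α ^ 2)⁻¹ * (1 - h - p) ^ 2)
        + h ^ 2 / (1 - (1 - k) ^ 2) * (q ^ 2 + γ * (α ^ 2)⁻¹ * (k - q) ^ 2)
        + ξ * h ^ 2 / (1 - (1 - k) ^ 2) := by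
  unfold lqLagrangian
  ring

noncomputable def lqReduced (β h k : ℝ) : ℝ :=
  β * (1 - h) ^ 2 + (β * k ^ 2 + 1) * h ^ 2 / (1 - (1 - k) ^ 2)

theorem mul_lqReduced_le_lqLagrangian {ξ γ α β : ℝ} (h k p q : ℝ) (hγ : 0 ≤ γ)
    (hβ : β * ξ * (1 + γ * (α ^ 2)⁻¹) = γ * (α ^ 2)⁻¹) (hk : 0 ≤ 1 - (1 - k) ^ 2) :
    ξ * lqReduced β h k ≤ lqLagrangian ξ γ α h k p q := by
  have hc : 0 ≤ γ * (α ^ 2)⁻¹ := by positivity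
  have hβξ : γ * (α ^ 2)⁻¹ / (1 + γ * (α ^ 2)⁻¹) = β * ξ := by
    rw [div_eq_iff (by positivity), hβ]
  have hp := mul_div_add_mul_sq_le p (1 - h - p) zero_le_one hc
  have hq := mul_div_add_mul_sq_le q (k - q) zero_le_one hc
  simp only [one_mul, add_sub_cancel, hβξ] at hp hq
  rw [lqLagrangian_eq]
  calc _ = β * ξ * (1 - h) ^ 2 + h ^ 2 / (1 - (1 - k) ^ 2) * (β * ξ * k ^ 2)
          + ξ * h ^ 2 / (1 - (1 - k) ^ 2) := by
        unfold lqReduced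
        ring
    _ ≤ _ := by gcongr

theorem mul_div_le_lqReduced {β k : ℝ} (h : ℝ) (hβ : 0 ≤ β) (hk₀ : 0 < k) (hk₂ : k < 2) :
    β * ((β * k ^ 2 + 1) / (2 * β * k + 1)) ≤ lqReduced β h k := by
  have hD := one_sub_one_sub_sq_pos hk₀ hk₂
  have hB : 0 ≤ (β * k ^ 2 + 1) / (1 - (1 - k) ^ 2) := by positivity
  calc β * ((β * k ^ 2 + 1) / (2 * β * k + 1))
      = β * ((β * k ^ 2 + 1) / (1 - (1 - k) ^ 2))
          / (β + (β * k ^ 2 + 1) / (1 - (1 - k) ^ 2)) * (1 - h + h) ^ 2 := by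
        rw [sub_add_cancel, one_pow, mul_one]
        field_simp
        ring
    _ ≤ β * (1 - h) ^ 2 + (β * k ^ 2 + 1) / (1 - (1 - k) ^ 2) * h ^ 2 :=
        mul_div_add_mul_sq_le _ _ hβ hB
    _ = lqReduced β h k := by
        unfold lqReduced
        ring

theorem le_div_of_quadratic_root {β k₀ : ℝ} (k : ℝ) (hβ : 0 ≤ β) (hk : 0 ≤ k)
    (hk₀ : β * k₀ ^ 2 + k₀ = 1) : k₀ ≤ (β * k ^ 2 + 1) / (2 * β * k + 1) := by
  rw [le_div_iff₀ (by positivity)]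
  nlinarith [mul_nonneg hβ (sq_nonneg (k - k₀))]

theorem lqLagrangian_at_quadratic_root {ξ γ α β k : ℝ} (hk₀ : 0 < k) (hk₂ : k < 2)
    (hβ : β * ξ * (1 + γ * (α ^ 2)⁻¹) = γ * (α ^ 2)⁻¹) (hquad : β * k ^ 2 + k = 1) :
    lqLagrangian ξ γ α (1 - k) k (β * ξ * k) (β * ξ * k) = ξ * (β * k) := by
  have hD := (one_sub_one_sub_sq_pos hk₀ hk₂).ne'
  unfold lqLagrangian
  rw [← sub_eq_zero]
  field_simp
  linear_combination (-k ^ 2 * (1 - β * ξ)) * hβ + ξ * (k - 1) * hquad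

theorem sqrt_quadratic_root {β k : ℝ} (hβ : 0 < β) (hk : k = (√(4 * β + 1) - 1) / (2 * β)) :
    0 < k ∧ β * k ^ 2 + k = 1 := by
  have hs := Real.sq_sqrt (show 0 ≤ 4 * β + 1 by linarith)
  have hs₁ : 1 < √(4 * β + 1) := by
    rw [Real.lt_sqrt zero_le_one]
    linarith
  subst hk
  generalize √(4 * β + 1) = s at hs hs₁
  refine ⟨div_pos (by linarith) (by positivity), ?_⟩
  field_simp
  linear_combination hs

/-- **Optimal LQ filters for transitive networks.** With `β = γ/(ξ(γ+α²))`, the minimum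
of the per-frequency Lagrangian over `h, k, p, q` (with `0 < k < 2`) is attained at
`p = q = ξ(√(4β+1)-1)/2`, `h = (2β+1-√(4β+1))/(2β)`, `k = (√(4β+1)-1)/(2β)`,
and at this minimum `h + k = 1`. -/
theorem lq_lagrangian_minimizer (ξ γ α : ℝ) (hξ : 0 < ξ) (hγ : 0 < γ) (hα : 0 < α)
    (β : ℝ) (hβ : β = γ / (ξ * (γ + α ^ 2)))
    (pstar hstar kstar : ℝ)
    (hp : pstar = ξ * (Real.sqrt (4 * β + 1) - 1) / 2)
    (hh : hstar = (2 * β + 1 - Real.sqrt (4 * β + 1)) / (2 * β))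
    (hk : kstar = (Real.sqrt (4 * β + 1) - 1) / (2 * β)) :
    (0 < kstar ∧ kstar < 2) ∧
    (∀ h k p q : ℝ, 0 < k → k < 2 →
      lqLagrangian ξ γ α hstar kstar pstar pstar ≤ lqLagrangian ξ γ α h k p q) ∧
    hstar + kstar = 1 := by
  have hβ₀ : 0 < β := by rw [hβ]; positivity
  have hrel : β * ξ * (1 + γ * (α ^ 2)⁻¹) = γ * (α ^ 2)⁻¹ := by
    rw [hβ]; field_simp; ring
  obtain ⟨hk₀, hquad⟩ := sqrt_quadratic_root hβ₀ hk
  have hk₂ : kstar < 2 := by nlinarith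
  have hhk : hstar = 1 - kstar := by rw [hh, hk]; field_simp; ring
  have hpk : pstar = β * ξ * kstar := by rw [hp, hk]; field_simp
  refine ⟨⟨hk₀, hk₂⟩, fun h k p q hk0 hk2 => ?_, by rw [hhk]; ring⟩
  rw [hhk, hpk, lqLagrangian_at_quadratic_root hk₀ hk₂ hrel hquad]
  calc ξ * (β * kstar)
      ≤ ξ * (β * ((β * k ^ 2 + 1) / (2 * β * k + 1))) := by
        gcongr
        exact le_div_of_quadratic_root k hβ₀.le hk0.le hquad
    _ ≤ ξ * lqReduced β h k := by
        gcongr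
        exact mul_div_le_lqReduced h hβ₀.le hk0 hk2
    _ ≤ lqLagrangian ξ γ α h k p q :=
        mul_lqReduced_le_lqLagrangian h k p q hγ.le hrel (one_sub_one_sub_sq_pos hk0 hk2).le
end

section
/- For the one-dimensional grid (Laplacian eigenvalues α(θ)² = 2 − 2cos θ, θ ∈ [−π, π]), as γ → 0⁺: (1/2π)∫_{−π}^{π} α(θ)²/(γ + α(θ)²)² dθ = (1/(4√γ))(1 + O(γ)) and (1/2π)∫_{−π}^{π} γ²/(γ + α(θ)²)² dθ = (√γ/4)(1 + O(γ)). -/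
/-!
Both integrals have closed forms. With `D = γ + 2 - 2 cos θ` the integrands are `D⁻¹ - γ D⁻²` and
`γ² D⁻²`, and for `|b| < a` explicit primitives give
`∫_{-π}^{π} (a - b cos)⁻¹ = 2π / √(a² - b²)` and `∫_{-π}^{π} (a - b cos)⁻² = 2π a / √(a² - b²)³`.
With `t = √(γ + 4)` the normalised integrals are exactly `(1 / (4√γ)) · 8 / t³` and
`(√γ / 4) · 4 (t² - 2) / t³`, and for `t ≥ 2` both factors differ from `1` by at most `t² - 4 = γ`.
-/

open Real intervalIntegral

section CosineKernel

variable {a b : ℝ}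

lemma sub_mul_cos_pos (hab : |b| < a) (x : ℝ) : 0 < a - b * cos x := by
  have : b * cos x ≤ |b| :=
    (le_abs_self _).trans <| by
      rw [abs_mul]; exact mul_le_of_le_one_right (abs_nonneg b) (abs_cos_le_one x)
  linarith

lemma sq_sub_sq_pos_of_abs_lt (hab : |b| < a) : 0 < a ^ 2 - b ^ 2 := by
  nlinarith [abs_nonneg b, sq_abs b]

lemma continuous_inv_sub_mul_cos (hab : |b| < a) : Continuous fun x => (a - b * cos x)⁻¹ :=
  (continuous_const.sub (continuous_const.mul continuous_cos)).inv₀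
    fun x => (sub_mul_cos_pos hab x).ne'

lemma continuous_inv_sub_mul_cos_sq (hab : |b| < a) :
    Continuous fun x => ((a - b * cos x) ^ 2)⁻¹ :=
  ((continuous_const.sub (continuous_const.mul continuous_cos)).pow 2).inv₀
    fun x => pow_ne_zero 2 (sub_mul_cos_pos hab x).ne'

/-- With `s = √(a² - b²)`, this agrees on `(-π, π)` with the half-angle primitive
`(2 / s) arctan (√((a + b) / (a - b)) tan (x / 2))`, but it is continuous on all of `ℝ`. -/
noncomputable def cosKernelPrimitive (a b x : ℝ) : ℝ :=
  (x + 2 * arctan (b * sin x / (a + √(a ^ 2 - b ^ 2) - b * cos x))) / √(a ^ 2 - b ^ 2)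

lemma hasDerivAt_cosKernelPrimitive (hab : |b| < a) (x : ℝ) :
    HasDerivAt (cosKernelPrimitive a b) (a - b * cos x)⁻¹ x := by
  set s := √(a ^ 2 - b ^ 2)
  have hs : s ^ 2 = a ^ 2 - b ^ 2 := sq_sqrt (sq_sub_sq_pos_of_abs_lt hab).le
  have hs0 : 0 < s := sqrt_pos.mpr (sq_sub_sq_pos_of_abs_lt hab)
  have hD := sub_mul_cos_pos hab x
  have hE : 0 < a + s - b * cos x := by linarith
  have hu : HasDerivAt (fun y => b * sin y / (a + s - b * cos y))
      ((b * cos x * (a + s - b * cos x) - b * sin x * (b * sin x)) / (a + s - b * cos x) ^ 2) x :=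
    ((hasDerivAt_sin x).const_mul b).div
      (by simpa using ((hasDerivAt_cos x).const_mul b).const_sub (a + s)) hE.ne'
  refine (((hasDerivAt_id x).add (hu.arctan.const_mul 2)).div_const s).congr_deriv ?_
  have hsc := sin_sq_add_cos_sq x
  have hsum_sq : (a + s - b * cos x) ^ 2 + (b * sin x) ^ 2 = 2 * (a + s) * (a - b * cos x) := by
    linear_combination b ^ 2 * hsc + hs
  field_simp
  linear_combination
    (a - b * cos x - s) * hsum_sq - 2 * b ^ 2 * (a - b * cos x) * hsc - 2 * (a - b * cos x) * hs

lemma integral_inv_sub_mul_cos (hab : |b| < a) :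
    ∫ x in (-π)..π, (a - b * cos x)⁻¹ = 2 * π / √(a ^ 2 - b ^ 2) := by
  rw [integral_eq_sub_of_hasDerivAt (fun x _ => hasDerivAt_cosKernelPrimitive hab x)
    ((continuous_inv_sub_mul_cos hab).intervalIntegrable _ _)]
  simp only [cosKernelPrimitive, sin_pi, sin_neg, neg_zero, mul_zero, zero_div, arctan_zero]
  ring

/-- `d/dx (b sin x / (a - b cos x)) = (a² - b²) / (a - b cos x)² - a / (a - b cos x)`. -/
noncomputable def cosKernelSqPrimitive (a b x : ℝ) : ℝ :=
  (a * cosKernelPrimitive a b x + b * sin x / (a - b * cos x)) / (a ^ 2 - b ^ 2)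

lemma hasDerivAt_cosKernelSqPrimitive (hab : |b| < a) (x : ℝ) :
    HasDerivAt (cosKernelSqPrimitive a b) ((a - b * cos x) ^ 2)⁻¹ x := by
  have hD := sub_mul_cos_pos hab x
  have hd := sq_sub_sq_pos_of_abs_lt hab
  have hq : HasDerivAt (fun y => b * sin y / (a - b * cos y))
      ((b * cos x * (a - b * cos x) - b * sin x * (b * sin x)) / (a - b * cos x) ^ 2) x :=
    ((hasDerivAt_sin x).const_mul b).div
      (by simpa using ((hasDerivAt_cos x).const_mul b).const_sub a) hD.ne'
  refine ((((hasDerivAt_cosKernelPrimitive hab x).const_mul a).add hq).div_const _).congr_deriv ?_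
  have hsc := sin_sq_add_cos_sq x
  field_simp
  linear_combination (-b ^ 2) * hsc

lemma integral_inv_sub_mul_cos_sq (hab : |b| < a) :
    ∫ x in (-π)..π, ((a - b * cos x) ^ 2)⁻¹ = 2 * π * a / √(a ^ 2 - b ^ 2) ^ 3 := by
  rw [integral_eq_sub_of_hasDerivAt (fun x _ => hasDerivAt_cosKernelSqPrimitive hab x)
    ((continuous_inv_sub_mul_cos_sq hab).intervalIntegrable _ _)]
  simp only [cosKernelSqPrimitive, cosKernelPrimitive, sin_pi, sin_neg, neg_zero, mul_zero,
    zero_div, arctan_zero, add_zero]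
  set s := √(a ^ 2 - b ^ 2)
  have hs : s ^ 2 = a ^ 2 - b ^ 2 := sq_sqrt (sq_sub_sq_pos_of_abs_lt hab).le
  have hs0 : 0 < s := sqrt_pos.mpr (sq_sub_sq_pos_of_abs_lt hab)
  rw [← hs]
  field_simp
  ring

end CosineKernel

lemma abs_eight_div_cube_sub_one_le {t : ℝ} (ht : 2 ≤ t) : |8 / t ^ 3 - 1| ≤ t ^ 2 - 4 := by
  have ht3 : 0 < t ^ 3 := by positivity
  rw [abs_le, div_sub_one ht3.ne', le_div_iff₀ ht3, div_le_iff₀ ht3]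
  constructor <;>
    nlinarith [mul_nonneg (sub_nonneg.2 ht) (sub_nonneg.2 ht), pow_le_pow_left₀ (by norm_num) ht 3]

lemma abs_four_mul_sub_two_div_cube_sub_one_le {t : ℝ} (ht : 2 ≤ t) :
    |4 * (t ^ 2 - 2) / t ^ 3 - 1| ≤ t ^ 2 - 4 := by
  have ht3 : 0 < t ^ 3 := by positivity
  rw [abs_le, div_sub_one ht3.ne', le_div_iff₀ ht3, div_le_iff₀ ht3]
  constructor <;>
    nlinarith [mul_nonneg (sub_nonneg.2 ht) (sub_nonneg.2 ht), pow_le_pow_left₀ (by norm_num) ht 3]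

section GridIntegrals

variable {γ : ℝ}

lemma sqrt_grid_discriminant (hγ : 0 < γ) : √((γ + 2) ^ 2 - 2 ^ 2) = √γ * √(γ + 4) := by
  rw [← sqrt_mul hγ.le]; ring_nf

lemma integral_grid_flow (hγ : 0 < γ) :
    ∫ θ in (-π)..π, (2 - 2 * cos θ) / (γ + (2 - 2 * cos θ)) ^ 2
      = 4 * π / (√γ * √(γ + 4) ^ 3) := by
  have hab : |(2 : ℝ)| < γ + 2 := by rw [abs_two]; linarith
  have hsplit : ∀ θ, (2 - 2 * cos θ) / (γ + (2 - 2 * cos θ)) ^ 2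
      = (γ + 2 - 2 * cos θ)⁻¹ - γ * ((γ + 2 - 2 * cos θ) ^ 2)⁻¹ := fun θ => by
    have := sub_mul_cos_pos hab θ
    rw [show γ + (2 - 2 * cos θ) = γ + 2 - 2 * cos θ by ring]
    field_simp
    ring
  simp_rw [hsplit]
  rw [integral_sub ((continuous_inv_sub_mul_cos hab).intervalIntegrable _ _)
      (((continuous_inv_sub_mul_cos_sq hab).intervalIntegrable _ _).const_mul γ),
    integral_const_mul, integral_inv_sub_mul_cos hab, integral_inv_sub_mul_cos_sq hab,
    sqrt_grid_discriminant hγ]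
  have hr : √γ ^ 2 = γ := sq_sqrt hγ.le
  have ht : √(γ + 4) ^ 2 = γ + 4 := sq_sqrt (by linarith)
  have hr0 : 0 < √γ := sqrt_pos.mpr hγ
  have ht0 : 0 < √(γ + 4) := sqrt_pos.mpr (by linarith)
  field_simp
  linear_combination (2 * √(γ + 4) ^ 2 - 4) * hr + 2 * γ * ht

lemma integral_grid_waste (hγ : 0 < γ) :
    ∫ θ in (-π)..π, γ ^ 2 / (γ + (2 - 2 * cos θ)) ^ 2
      = 2 * π * √γ * (γ + 2) / √(γ + 4) ^ 3 := by
  have hab : |(2 : ℝ)| < γ + 2 := by rw [abs_two]; linarith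
  simp_rw [div_eq_mul_inv (γ ^ 2), show ∀ θ, γ + (2 - 2 * cos θ) = γ + 2 - 2 * cos θ by
    intro θ; ring]
  rw [integral_const_mul, integral_inv_sub_mul_cos_sq hab, sqrt_grid_discriminant hγ]
  have hr : γ ^ 2 = √γ ^ 4 := by rw [show 4 = 2 * 2 from rfl, pow_mul, sq_sqrt hγ.le]
  have hr0 : 0 < √γ := sqrt_pos.mpr hγ
  have ht0 : 0 < √(γ + 4) := sqrt_pos.mpr (by linarith)
  rw [hr]
  field_simp

lemma two_le_sqrt_add_four (hγ : 0 ≤ γ) : 2 ≤ √(γ + 4) :=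
  Real.le_sqrt_of_sq_le (by linarith)

lemma abs_grid_flow_sub_le (hγ : 0 < γ) :
    |(1 / (2 * π)) * (∫ θ in (-π)..π, (2 - 2 * cos θ) / (γ + (2 - 2 * cos θ)) ^ 2)
      - 1 / (4 * √γ)| ≤ γ * (1 / (4 * √γ)) := by
  have hr0 : 0 < √γ := sqrt_pos.mpr hγ
  have ht : √(γ + 4) ^ 2 = γ + 4 := sq_sqrt (by linarith)
  have ht2 := two_le_sqrt_add_four hγ.le
  have hfactor : (1 / (2 * π)) * (4 * π / (√γ * √(γ + 4) ^ 3)) - 1 / (4 * √γ)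
      = (8 / √(γ + 4) ^ 3 - 1) * (1 / (4 * √γ)) := by
    field_simp
    ring
  rw [integral_grid_flow hγ, hfactor, abs_mul, abs_of_pos (by positivity : 0 < 1 / (4 * √γ))]
  calc |8 / √(γ + 4) ^ 3 - 1| * (1 / (4 * √γ))
      ≤ (√(γ + 4) ^ 2 - 4) * (1 / (4 * √γ)) := by
        gcongr; exact abs_eight_div_cube_sub_one_le ht2
    _ = γ * (1 / (4 * √γ)) := by rw [ht]; ring

lemma abs_grid_waste_sub_le (hγ : 0 < γ) :
    |(1 / (2 * π)) * (∫ θ in (-π)..π, γ ^ 2 / (γ + (2 - 2 * cos θ)) ^ 2) - √γ / 4|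
      ≤ γ * (√γ / 4) := by
  have hr0 : 0 < √γ := sqrt_pos.mpr hγ
  have ht : √(γ + 4) ^ 2 = γ + 4 := sq_sqrt (by linarith)
  have ht2 := two_le_sqrt_add_four hγ.le
  have hfactor : (1 / (2 * π)) * (2 * π * √γ * (γ + 2) / √(γ + 4) ^ 3) - √γ / 4
      = (4 * (√(γ + 4) ^ 2 - 2) / √(γ + 4) ^ 3 - 1) * (√γ / 4) := by
    rw [ht]
    field_simp
    ring
  rw [integral_grid_waste hγ, hfactor, abs_mul, abs_of_pos (by positivity : 0 < √γ / 4)]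
  calc |4 * (√(γ + 4) ^ 2 - 2) / √(γ + 4) ^ 3 - 1| * (√γ / 4)
      ≤ (√(γ + 4) ^ 2 - 4) * (√γ / 4) := by
        gcongr; exact abs_four_mul_sub_two_div_cube_sub_one_le ht2
    _ = γ * (√γ / 4) := by rw [ht]; ring

end GridIntegrals

/-- **1-D Parseval integrals, no storage.** With `α(θ)² = 2 - 2cos θ`, as `γ → 0⁺`:
`(1/2π) ∫_{-π}^{π} α²/(γ+α²)² dθ = (1/(4√γ))(1 + O(γ))` and
`(1/2π) ∫_{-π}^{π} γ²/(γ+α²)² dθ = (√γ/4)(1 + O(γ))`. -/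
theorem oneD_noStorage_variances :
    ∃ c δ : ℝ, 0 < c ∧ 0 < δ ∧ ∀ γ : ℝ, 0 < γ → γ < δ →
      |(1 / (2 * π)) * (∫ θ in (-π)..π,
          (2 - 2 * Real.cos θ) / (γ + (2 - 2 * Real.cos θ)) ^ 2)
        - 1 / (4 * Real.sqrt γ)| ≤ c * γ * (1 / (4 * Real.sqrt γ)) ∧
      |(1 / (2 * π)) * (∫ θ in (-π)..π,
          γ ^ 2 / (γ + (2 - 2 * Real.cos θ)) ^ 2)
        - Real.sqrt γ / 4| ≤ c * γ * (Real.sqrt γ / 4) := by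
  refine ⟨1, 1, one_pos, one_pos, fun γ hγ _ => ?_⟩
  rw [one_mul]
  exact ⟨abs_grid_flow_sub_le hγ, abs_grid_waste_sub_le hγ⟩
end
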